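/- arXiv:1910.13666 — 2 statements merged into one kernel-verified Lean document; each statement's English description precedes it below -/
import Mathlib

section
/- (Frobenius) Let $k$ be a field, $A \in M_n(k)$, and suppose $f_1 \mid f_2 \mid \cdots \mid f_m$ are nonzero monic polynomials in $k[x]$ (the invariant factors of $A$) such that $V_A$ is isomorphic as a $k[x]$-module to $\bigoplus_{i=1}^m k[x]/f_i k[x]$. Then $\dim_k C_{M_n(k)}(A) = \sum_{i=0}^{m-1} (2i+1) \deg f_{m-i}$. -/
/-!
Through `V_A`, the centralizer of `A` is the ring of `k[X]`-endomorphisms of `⨁ᵢ k[X]/(fᵢ)`,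
which splits as `⨁_{i,j} Hom(k[X]/(fᵢ), k[X]/(fⱼ))`. Writing `fᵢ = d a`, `fⱼ = d b` with
`d = gcd(fᵢ, fⱼ)` and `a, b` coprime, `r ↦ (x ↦ r b x)` identifies `k[X]/(d)` with that
summand, so it has dimension `deg gcd(fᵢ, fⱼ) = deg f_{min(i,j)}`. Finally, `f_l` is
`f_{min(i,j)}` for exactly `2(m-1-l)+1` pairs `(i, j)`.
-/

open Polynomial Matrix

/-- The centralizer `C_{Mₙ(k)}(A) = {B : B * A = A * B}`, as a `k`-subspace of `Mₙ(k)`. -/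
def matrixCentralizer {k : Type*} [Field k] {n : ℕ} (A : Matrix (Fin n) (Fin n) k) :
    Submodule k (Matrix (Fin n) (Fin n) k) where
  carrier := {B : Matrix (Fin n) (Fin n) k | B * A = A * B}
  add_mem' hB hC := by simp only [Set.mem_setOf_eq] at *; rw [add_mul, mul_add, hB, hC]
  zero_mem' := by simp
  smul_mem' c B hB := by
    simp only [Set.mem_setOf_eq] at *
    rw [Matrix.smul_mul, Matrix.mul_smul, hB]

open Module

namespace Module.AEval'

variable {R M : Type*} [CommSemiring R] [AddCommMonoid M] [Module R M] (φ : Module.End R M)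

noncomputable def endEquivCentralizer :
    Module.End R[X] (AEval' φ) ≃ₗ[R] Subalgebra.centralizer R {φ} where
  toFun g := ⟨(of φ).symm.toLinearMap ∘ₗ g.restrictScalars R ∘ₗ (of φ).toLinearMap, by
    simp only [Subalgebra.mem_centralizer_iff R, Set.mem_singleton_iff, forall_eq]
    ext m
    simp [← AEval'.X_smul_of]⟩
  invFun z := LinearMap.ofAEval φ ((of φ).toLinearMap ∘ₗ z.1) fun m => by
    have hz : φ * z = z * φ := (Subalgebra.mem_centralizer_iff R).1 z.2 φ rfl
    simp [AEval'.X_smul_of, ← Module.End.mul_apply, hz]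
  map_add' _ _ := rfl
  map_smul' _ _ := rfl
  left_inv g := by ext m; rfl
  right_inv z := rfl

end Module.AEval'

section MatrixCentralizer

variable {k : Type*} [Field k] {n : ℕ} (A : Matrix (Fin n) (Fin n) k)

theorem mem_matrixCentralizer {B : Matrix (Fin n) (Fin n) k} :
    B ∈ matrixCentralizer A ↔ B * A = A * B :=
  Iff.rfl

theorem matrixCentralizer_map_toLin' :
    (matrixCentralizer A).map (Matrix.toLin' : Matrix (Fin n) (Fin n) k ≃ₗ[k] _).toLinearMap =
      (Subalgebra.centralizer k {Matrix.toLin' A}).toSubmodule := by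
  ext φ
  obtain ⟨B, rfl⟩ := Matrix.toLin'.surjective φ
  simp only [Submodule.mem_map_equiv, LinearEquiv.symm_apply_apply, mem_matrixCentralizer,
    Subalgebra.mem_toSubmodule, Subalgebra.mem_centralizer_iff, Set.mem_singleton_iff, forall_eq,
    Module.End.mul_eq_comp, ← Matrix.toLin'_mul, Matrix.toLin'.injective.eq_iff, eq_comm]

theorem finrank_matrixCentralizer_eq_finrank_end :
    finrank k (matrixCentralizer A) = finrank k (Module.End k[X] (AEval' (Matrix.toLin' A))) := by
  rw [(LinearEquiv.ofSubmodules _ _ _ (matrixCentralizer_map_toLin' A)).finrank_eq,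
    Subalgebra.finrank_toSubmodule, (AEval'.endEquivCentralizer _).finrank_eq]

end MatrixCentralizer

section QuotSpan

variable {R : Type*} [CommRing R] {d a b : R}

variable (d a b) in
noncomputable def mulQuotSpan :
    R ⧸ Ideal.span {d * a} →ₗ[R] R ⧸ Ideal.span {d * b} :=
  (Ideal.span {d * a}).mapQ _ (LinearMap.mulLeft R b) fun x hx => by
    obtain ⟨t, rfl⟩ := Ideal.mem_span_singleton.1 hx
    exact Ideal.mem_span_singleton.2 ⟨a * t, by simp only [LinearMap.mulLeft_apply]; ring⟩

theorem mulQuotSpan_mk (x : R) :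
    mulQuotSpan d a b (Submodule.Quotient.mk x) = Submodule.Quotient.mk (b * x) :=
  rfl

variable (d a b) in
noncomputable def quotSpanToLinearMap :
    R ⧸ Ideal.span {d} →ₗ[R] (R ⧸ Ideal.span {d * a} →ₗ[R] R ⧸ Ideal.span {d * b}) :=
  (Ideal.span {d}).liftQ (LinearMap.toSpanSingleton R _ (mulQuotSpan d a b)) <| by
    rw [Ideal.span_singleton_le_iff_mem, LinearMap.mem_ker]
    ext
    change d • mulQuotSpan d a b (Submodule.Quotient.mk 1) = 0
    rw [mulQuotSpan_mk, ← Submodule.Quotient.mk_smul, Submodule.Quotient.mk_eq_zero, smul_eq_mul,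
      mul_one]
    exact Ideal.mem_span_singleton_self _

theorem quotSpanToLinearMap_mk_apply_one (r : R) :
    quotSpanToLinearMap d a b (Submodule.Quotient.mk r) (Submodule.Quotient.mk 1) =
      Submodule.Quotient.mk (r * b) := by
  change r • mulQuotSpan d a b (Submodule.Quotient.mk 1) = _
  rw [mulQuotSpan_mk, ← Submodule.Quotient.mk_smul, smul_eq_mul, mul_one]

theorem quotSpanToLinearMap_injective [IsDomain R] (hb : b ≠ 0) :
    Function.Injective (quotSpanToLinearMap d a b) := by
  refine (injective_iff_map_eq_zero _).2 fun x hx => ?_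
  obtain ⟨r, rfl⟩ := Submodule.Quotient.mk_surjective _ x
  have hrb := LinearMap.congr_fun hx (Submodule.Quotient.mk 1)
  rw [quotSpanToLinearMap_mk_apply_one, LinearMap.zero_apply, Submodule.Quotient.mk_eq_zero,
    Ideal.mem_span_singleton] at hrb
  rw [Submodule.Quotient.mk_eq_zero, Ideal.mem_span_singleton]
  exact (mul_dvd_mul_iff_right hb).1 hrb

theorem quotSpanToLinearMap_surjective [IsDomain R] (hd : d ≠ 0) (hab : IsCoprime a b) :
    Function.Surjective (quotSpanToLinearMap d a b) := by
  intro φ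
  obtain ⟨y, hy⟩ := Submodule.Quotient.mk_surjective _ (φ (Submodule.Quotient.mk 1))
  have hay : b ∣ a * y := by
    have h := φ.map_smul (d * a) (Submodule.Quotient.mk 1)
    rw [← Submodule.Quotient.mk_smul, (Submodule.Quotient.mk_eq_zero _).2 (by simp), map_zero,
      ← hy, ← Submodule.Quotient.mk_smul, eq_comm, Submodule.Quotient.mk_eq_zero,
      Ideal.mem_span_singleton, smul_eq_mul, mul_assoc] at h
    exact (mul_dvd_mul_iff_left hd).1 h
  obtain ⟨r, rfl⟩ := hab.symm.dvd_of_dvd_mul_left hay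
  refine ⟨Submodule.Quotient.mk r, ?_⟩
  ext
  rw [LinearMap.comp_apply, Submodule.mkQ_apply, quotSpanToLinearMap_mk_apply_one, mul_comm r b]
  exact hy

theorem nonempty_quotSpan_gcd_equiv_linearMap [IsDomain R] [IsBezout R] [GCDMonoid R] (f : R)
    {g : R} (hg : g ≠ 0) :
    Nonempty ((R ⧸ Ideal.span {gcd f g}) ≃ₗ[R]
      (R ⧸ Ideal.span {f} →ₗ[R] R ⧸ Ideal.span {g})) := by
  obtain ⟨a, b, hfa, hgb, hab⟩ := extract_gcd f g
  have hd : gcd f g ≠ 0 := fun h => hg ((gcd_eq_zero_iff f g).1 h).2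
  generalize gcd f g = d at hfa hgb hd ⊢
  subst hfa hgb
  exact ⟨.ofBijective _ ⟨quotSpanToLinearMap_injective (right_ne_zero_of_mul hg),
    quotSpanToLinearMap_surjective hd ((gcd_isUnit_iff a b).1 hab)⟩⟩

end QuotSpan

namespace Polynomial

variable {k : Type*} [Field k] [DecidableEq k]

theorem finrank_linearMap_quotSpan (f : k[X]) {g : k[X]} (hg : g ≠ 0) :
    finrank k (k[X] ⧸ Ideal.span {f} →ₗ[k[X]] k[X] ⧸ Ideal.span {g}) = (gcd f g).natDegree := by
  obtain ⟨e⟩ := nonempty_quotSpan_gcd_equiv_linearMap f hg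
  rw [← (e.restrictScalars k).finrank_eq, finrank_quotient_span_eq_natDegree]

theorem finite_linearMap_quotSpan (f : k[X]) {g : k[X]} (hg : g ≠ 0) :
    Module.Finite k (k[X] ⧸ Ideal.span {f} →ₗ[k[X]] k[X] ⧸ Ideal.span {g}) := by
  obtain ⟨e⟩ := nonempty_quotSpan_gcd_equiv_linearMap f hg
  have : Module.Finite k (k[X] ⧸ Ideal.span {gcd f g}) :=
    (AdjoinRoot.powerBasis fun h => hg ((gcd_eq_zero_iff f g).1 h).2).finite
  exact Module.Finite.equiv (e.restrictScalars k)

theorem finrank_linearMap_pi_quotSpan {ι κ : Type*} [Fintype ι] [Fintype κ] (f : ι → k[X])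
    {g : κ → k[X]} (hg : ∀ j, g j ≠ 0) :
    finrank k ((Π i, k[X] ⧸ Ideal.span {f i}) →ₗ[k[X]] Π j, k[X] ⧸ Ideal.span {g j}) =
      ∑ i, ∑ j, (gcd (f i) (g j)).natDegree := by
  classical
  have hfinite := fun i j => finite_linearMap_quotSpan (f i) (hg j)
  have hfree (i : ι) (j : κ) :
      Module.Free k (k[X] ⧸ Ideal.span {f i} →ₗ[k[X]] k[X] ⧸ Ideal.span {g j}) :=
    Module.Free.of_divisionRing k _
  rw [← (LinearMap.lsum k[X] (fun i => k[X] ⧸ Ideal.span {f i}) k).finrank_eq,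
    ← (LinearEquiv.piCongrRight fun i => LinearEquiv.linearMapPi (R := k[X])
      (M₂ := k[X] ⧸ Ideal.span {f i}) (φ := fun j => k[X] ⧸ Ideal.span {g j}) k).finrank_eq]
  simp only [Module.finrank_pi_fintype, finrank_linearMap_quotSpan _ (hg _)]

theorem natDegree_gcd_eq_left_of_dvd {p q : k[X]} (h : p ∣ q) :
    (gcd p q).natDegree = p.natDegree :=
  natDegree_eq_of_degree_eq (degree_eq_degree_of_associated (associated_gcd_left_iff.2 h)).symm

end Polynomial

theorem Fin.sum_sum_apply_min {M : Type*} [AddCommMonoid M] :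
    ∀ {m : ℕ} (g : Fin m → M), ∑ i, ∑ j, g (min i j) = ∑ i, (2 * (i.rev : ℕ) + 1) • g i
  | 0, _ => by simp
  | m + 1, g => by
    have hcast (i j : Fin m) : min i.castSucc j.castSucc = (min i j).castSucc :=
      (Monotone.map_min Fin.strictMono_castSucc.monotone).symm
    have hweight (r : ℕ) (x : M) : (2 * (r + 1) + 1) • x = (2 * r + 1) • x + x + x := by
      rw [show 2 * (r + 1) + 1 = 2 * r + 1 + 1 + 1 by ring, add_smul, add_smul, one_smul]
    have ih := Fin.sum_sum_apply_min (g ∘ Fin.castSucc)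
    simp only [Function.comp_apply] at ih
    simp only [Fin.sum_univ_castSucc, hcast, ih, min_eq_left (Fin.castSucc_lt_last _).le,
      min_eq_right (Fin.castSucc_lt_last _).le, min_self, Fin.rev_castSucc, Fin.val_succ,
      Fin.rev_last, Fin.val_zero, hweight, Finset.sum_add_distrib, mul_zero, zero_add, one_smul]
    abel

theorem finrank_centralizer_eq_sum_odd_mul_deg_general {k : Type*} [Field k] {n m : ℕ}
    (A : Matrix (Fin n) (Fin n) k) (f : Fin m → k[X])
    (hne : ∀ i, f i ≠ 0)
    (hdvd : ∀ i j : Fin m, i ≤ j → f i ∣ f j)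
    (hiso : Nonempty (Module.AEval' (Matrix.toLin' A) ≃ₗ[k[X]]
      (∀ i : Fin m, k[X] ⧸ Ideal.span {f i}))) :
    Module.finrank k (matrixCentralizer A) =
      ∑ i : Fin m, (2 * (i : ℕ) + 1) * (f i.rev).natDegree := by
  classical
  obtain ⟨e⟩ := hiso
  have hgcd (i j : Fin m) : (gcd (f i) (f j)).natDegree = (f (min i j)).natDegree := by
    rcases le_total i j with h | h
    · rw [min_eq_left h, natDegree_gcd_eq_left_of_dvd (hdvd i j h)]
    · rw [min_eq_right h, gcd_comm, natDegree_gcd_eq_left_of_dvd (hdvd j i h)]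
  calc finrank k (matrixCentralizer A)
      = finrank k (Module.End k[X] (Π i, k[X] ⧸ Ideal.span {f i})) := by
        rw [finrank_matrixCentralizer_eq_finrank_end, (e.conj.restrictScalars k).finrank_eq]
    _ = ∑ i, ∑ j, (f (min i j)).natDegree := by
        simp only [finrank_linearMap_pi_quotSpan f hne, hgcd]
    _ = ∑ i, (2 * (i.rev : ℕ) + 1) • (f i).natDegree :=
        Fin.sum_sum_apply_min fun i => (f i).natDegree
    _ = ∑ i : Fin m, (2 * (i : ℕ) + 1) * (f i.rev).natDegree :=
        Fintype.sum_equiv Fin.revPerm _ _ fun i => by simp [Fin.rev_rev]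

/-- **Frobenius.** If the invariant factors of `A` are the nonzero monic
polynomials `f 0 ∣ f 1 ∣ ⋯ ∣ f (m-1)`, i.e. `V_A ≅ ⨁ᵢ k[x]/fᵢ k[x]`, then the `k`-dimension
of the centralizer of `A` is `∑_{i=0}^{m-1} (2i+1) · deg f_{m-i}` (here `f i.rev = f_{m-i}`
in one-based indexing). -/
theorem finrank_centralizer_eq_sum_odd_mul_deg {k : Type*} [Field k] {n m : ℕ}
    (A : Matrix (Fin n) (Fin n) k) (f : Fin m → k[X])
    (hmonic : ∀ i, (f i).Monic) (hne : ∀ i, f i ≠ 0)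
    (hdvd : ∀ i j : Fin m, i ≤ j → f i ∣ f j)
    (hiso : Nonempty (Module.AEval' (Matrix.toLin' A) ≃ₗ[k[X]]
      (∀ i : Fin m, k[X] ⧸ Ideal.span {f i}))) :
    Module.finrank k (matrixCentralizer A) =
      ∑ i : Fin m, (2 * (i : ℕ) + 1) * (f i.rev).natDegree :=
  finrank_centralizer_eq_sum_odd_mul_deg_general A f hne hdvd hiso
end

section
/- Let $k$ be a field and $f_1 \mid f_2 \mid \cdots \mid f_m$ be nonzero monic polynomials in $k[x]$ with $\deg f_i = n_i \ge 1$, $n = n_1 + \cdots + n_m$, and let $A = C(f_1) \oplus \cdots \oplus C(f_m) \in M_n(k)$ be the block diagonal matrix of companion matrices. For $i > j$ let $q_{ij} \in k^{n_i}$ be the coefficient vector of $f_i / f_j$ (padded with zeros), and for $i \le j$ let $q_{ij} = e_1 \in k^{n_i}$; let $Q_{ij} \in M_{n_i, n_j}(k)$ be the matrix whose $t$-th column is $C(f_i)^{t-1} q_{ij}$ for $t = 1, \ldots, n_j$. Then a matrix $B \in M_n(k)$ commutes with $A$ if and only if, writing $B$ in blocks $B_{ij} \in M_{n_i, n_j}(k)$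 conforming with the block structure of $A$, for every pair $(i,j)$ there exists $\lambda_{ij} \in k[x]$ such that $B_{ij} = \lambda_{ij}(C(f_i)) \, Q_{ij}$. -/
/-!
Identify `k^(deg g)` with `k[X]/(g)` through the coefficients of the remainder mod `g`;
then `C(g)` is multiplication by `X`, its columns being `X^(s+1)` and, for the last one,
`X^(deg g) ≡ X^(deg g) - g`. A matrix `T` with `T C(h) = C(g) T` is therefore a `k[X]`-linear
map `k[X]/(h) → k[X]/(g)`, i.e. multiplication by some `G` with `g ∣ h G`. For `g = f_i`,
`h = f_j` the admissible `G` are exactly the multiples `λ q_ij`, and multiplication by `λ q_ij`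
has the matrix `λ(C(f_i)) Q_ij`.
-/

open Polynomial Matrix

/-- The companion matrix of a (monic, degree `n`) polynomial `f = xⁿ + c_{n-1}x^{n-1} + ⋯ + c₀`. -/
def companionMatrix {k : Type*} [Field k] (n : ℕ) (f : k[X]) : Matrix (Fin n) (Fin n) k :=
  Matrix.of fun i j =>
    if (j : ℕ) + 1 = n then -f.coeff i
    else if (i : ℕ) = (j : ℕ) + 1 then 1 else 0

/-- The generating polynomial `q_{ij}`: equal to `f_i / f_j` when `i > j` and to `1`
when `i ≤ j`. -/
noncomputable def genPoly {k : Type*} [Field k] {m : ℕ} (f : Fin m → k[X]) (i j : Fin m) :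
    k[X] :=
  if j < i then f i /ₘ f j else 1

/-- The generating matrix `Q_{ij}`: its `t`-th column is `C(f_i)^(t-1) q_{ij}`, where
`q_{ij} ∈ k^{n_i}` is the coefficient vector of the generating polynomial `q_{ij}`. -/
noncomputable def genMatrix {k : Type*} [Field k] {m : ℕ} (f : Fin m → k[X]) (i j : Fin m) :
    Matrix (Fin (f i).natDegree) (Fin (f j).natDegree) k :=
  Matrix.of fun r t =>
    ((companionMatrix (f i).natDegree (f i) ^ (t : ℕ)) *ᵥ
      fun l : Fin (f i).natDegree => (genPoly f i j).coeff l) r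

namespace Polynomial

section RemCoeffs

variable {R : Type*} [CommRing R] {g h : R[X]}

noncomputable def remCoeffs (g : R[X]) : R[X] →ₗ[R] Fin g.natDegree → R :=
  LinearMap.pi (fun l => lcoeff R l) ∘ₗ modByMonicHom g

theorem remCoeffs_apply (p : R[X]) (l : Fin g.natDegree) :
    remCoeffs g p l = (p %ₘ g).coeff l := rfl

theorem remCoeffs_eq_zero_iff (hg : g.Monic) {p : R[X]} : remCoeffs g p = 0 ↔ g ∣ p := by
  rw [← modByMonic_eq_zero_iff_dvd hg]
  refine ⟨fun hp => ?_, fun hp => by ext l; simp [remCoeffs_apply, hp]⟩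
  nontriviality R
  ext l
  rw [coeff_zero]
  by_cases hl : l < g.natDegree
  · exact congrFun hp ⟨l, hl⟩
  · refine coeff_eq_zero_of_degree_lt ((degree_modByMonic_lt p hg).trans_le ?_)
    rw [degree_eq_natDegree hg.ne_zero]
    exact_mod_cast not_lt.1 hl

theorem remCoeffs_of_degree_lt (hg : g.Monic) {p : R[X]} (hp : p.degree < g.degree) :
    remCoeffs g p = fun l : Fin g.natDegree => p.coeff l := by
  nontriviality R
  ext l
  rw [remCoeffs_apply, (modByMonic_eq_self_iff hg).2 hp]

theorem remCoeffs_X_pow (hg : g.Monic) (s : Fin g.natDegree) :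
    remCoeffs g (X ^ (s : ℕ)) = Pi.single s 1 := by
  nontriviality R
  rw [remCoeffs_of_degree_lt hg]
  · ext l
    simp [coeff_X_pow, Pi.single_apply, Fin.ext_iff]
  · rw [degree_X_pow, degree_eq_natDegree hg.ne_zero]
    exact_mod_cast s.isLt

theorem remCoeffs_X_pow_natDegree (hg : g.Monic) :
    remCoeffs g (X ^ g.natDegree) = fun l : Fin g.natDegree => -g.coeff l := by
  nontriviality R
  have hlt : (X ^ g.natDegree - g).degree < g.degree := by
    have hdeg : (X ^ g.natDegree : R[X]).degree = g.degree := by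
      rw [degree_X_pow, degree_eq_natDegree hg.ne_zero]
    rw [← hdeg]
    exact degree_sub_lt_left hdeg (monic_X_pow _).ne_zero
      (by rw [leadingCoeff_X_pow, hg.leadingCoeff])
  have hg0 : remCoeffs g g = 0 := (remCoeffs_eq_zero_iff hg).2 dvd_rfl
  rw [← sub_zero (remCoeffs g _), ← hg0, ← map_sub, remCoeffs_of_degree_lt hg hlt]
  ext l
  simp [coeff_X_pow, l.isLt.ne]

theorem remCoeffs_surjective (hg : g.Monic) : Function.Surjective (remCoeffs g) := by
  intro v
  refine ⟨∑ l, C (v l) * X ^ (l : ℕ), ?_⟩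
  simp only [map_sum, ← smul_eq_C_mul, map_smul, remCoeffs_X_pow hg]
  exact (pi_eq_sum_univ' v).symm

theorem lhom_ext_of_monic {M : Type*} [AddCommMonoid M] [Module R M] (hh : h.Monic)
    {L₁ L₂ : R[X] →ₗ[R] M} (h₁ : ∀ p, L₁ (h * p) = 0) (h₂ : ∀ p, L₂ (h * p) = 0)
    (hX : ∀ s < h.natDegree, L₁ (X ^ s) = L₂ (X ^ s)) : L₁ = L₂ := by
  classical
  nontriviality R
  refine LinearMap.ext fun p => ?_
  rw [← modByMonic_add_div p h, map_add, map_add, h₁, h₂]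
  have hmem : p %ₘ h ∈ degreeLT R h.natDegree := by
    rw [mem_degreeLT, ← degree_eq_natDegree hh.ne_zero]
    exact degree_modByMonic_lt p hh
  rw [degreeLT_eq_span_X_pow, Finset.coe_image, Finset.coe_range] at hmem
  refine congrArg (· + 0) (LinearMap.eqOn_span' ?_ hmem)
  rintro _ ⟨s, hs, rfl⟩
  exact hX s hs

end RemCoeffs

section MulMatrixMod

variable {R : Type*} [CommRing R] {g h : R[X]}

noncomputable def mulMatrixMod (g : R[X]) (n : ℕ) (G : R[X]) :
    Matrix (Fin g.natDegree) (Fin n) R :=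
  Matrix.of fun r s => remCoeffs g (X ^ (s : ℕ) * G) r

theorem mulMatrixMod_mulVec_single {n : ℕ} (G : R[X]) (s : Fin n) :
    mulMatrixMod g n G *ᵥ Pi.single s 1 = remCoeffs g (X ^ (s : ℕ) * G) := by
  rw [Matrix.mulVec_single_one]
  rfl

theorem mulVec_remCoeffs_eq_iff (hg : g.Monic) (hh : h.Monic)
    (T : Matrix (Fin g.natDegree) (Fin h.natDegree) R) (G : R[X]) :
    (∀ p, T *ᵥ remCoeffs h p = remCoeffs g (G * p)) ↔
      g ∣ h * G ∧ T = mulMatrixMod g h.natDegree G := by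
  constructor
  · intro hT
    refine ⟨?_, Matrix.ext_of_mulVec_single fun s => ?_⟩
    · rw [← remCoeffs_eq_zero_iff hg, mul_comm, ← hT, (remCoeffs_eq_zero_iff hh).2 dvd_rfl,
        Matrix.mulVec_zero]
    · rw [mulMatrixMod_mulVec_single, ← remCoeffs_X_pow hh, hT, mul_comm]
  · rintro ⟨hdvd, rfl⟩ p
    refine LinearMap.congr_fun (lhom_ext_of_monic
      (L₁ := (mulMatrixMod g h.natDegree G).mulVecLin ∘ₗ remCoeffs h)
      (L₂ := remCoeffs g ∘ₗ LinearMap.mulLeft R G) hh (fun p => ?_) (fun p => ?_) ?_) p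
    · simp [(remCoeffs_eq_zero_iff hh).2 (dvd_mul_right h p)]
    · simp only [LinearMap.comp_apply, LinearMap.mulLeft_apply]
      rw [remCoeffs_eq_zero_iff hg, ← mul_assoc, mul_comm G]
      exact hdvd.mul_right p
    · intro s hs
      simp only [LinearMap.comp_apply, LinearMap.mulLeft_apply, Matrix.mulVecLin_apply]
      rw [remCoeffs_X_pow hh ⟨s, hs⟩, mulMatrixMod_mulVec_single, mul_comm]

end MulMatrixMod

section Companion

variable {k : Type*} [Field k] {g h : k[X]}

theorem companionMatrix_mulVec_single (hg : g.Monic) (s : Fin g.natDegree) :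
    companionMatrix g.natDegree g *ᵥ Pi.single s 1 = remCoeffs g (X ^ ((s : ℕ) + 1)) := by
  rw [Matrix.mulVec_single_one]
  by_cases hs : (s : ℕ) + 1 = g.natDegree
  · rw [hs, remCoeffs_X_pow_natDegree hg]
    ext r
    exact if_pos hs
  · rw [remCoeffs_X_pow hg ⟨s + 1, by omega⟩]
    ext r
    refine (if_neg hs).trans ?_
    simp only [Pi.single_apply, Fin.ext_iff]

theorem companionMatrix_mulVec_remCoeffs (hg : g.Monic) (p : k[X]) :
    companionMatrix g.natDegree g *ᵥ remCoeffs g p = remCoeffs g (X * p) := by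
  refine LinearMap.congr_fun (lhom_ext_of_monic
    (L₁ := (companionMatrix g.natDegree g).mulVecLin ∘ₗ remCoeffs g)
    (L₂ := remCoeffs g ∘ₗ LinearMap.mulLeft k X) hg (fun p => ?_) (fun p => ?_) ?_) p
  · simp [(remCoeffs_eq_zero_iff hg).2 (dvd_mul_right g p)]
  · simp only [LinearMap.comp_apply, LinearMap.mulLeft_apply]
    exact (remCoeffs_eq_zero_iff hg).2 ((dvd_mul_right g p).mul_left X)
  · intro s hs
    simp only [LinearMap.comp_apply, LinearMap.mulLeft_apply, Matrix.mulVecLin_apply]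
    rw [remCoeffs_X_pow hg ⟨s, hs⟩, companionMatrix_mulVec_single hg, pow_succ']

theorem aeval_companionMatrix_mulVec_remCoeffs (hg : g.Monic) (lam p : k[X]) :
    aeval (companionMatrix g.natDegree g) lam *ᵥ remCoeffs g p = remCoeffs g (lam * p) := by
  induction lam using Polynomial.induction_on with
  | C a => simp [Algebra.algebraMap_eq_smul_one, Matrix.smul_mulVec, ← smul_eq_C_mul]
  | add p q hp hq => simp [Matrix.add_mulVec, hp, hq, add_mul]
  | monomial n a ih =>
    rw [pow_succ', mul_left_comm, map_mul, aeval_X, ← Matrix.mulVec_mulVec, ih,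
      companionMatrix_mulVec_remCoeffs hg]
    ring_nf

theorem aeval_companionMatrix_mul_mulMatrixMod (hg : g.Monic) {n : ℕ} (lam G : k[X]) :
    aeval (companionMatrix g.natDegree g) lam * mulMatrixMod g n G = mulMatrixMod g n (lam * G) :=
  Matrix.ext_of_mulVec_single fun s => by
    rw [← Matrix.mulVec_mulVec, mulMatrixMod_mulVec_single, mulMatrixMod_mulVec_single,
      aeval_companionMatrix_mulVec_remCoeffs hg, mul_left_comm]

theorem mul_companionMatrix_eq_iff_exists_mulVec_remCoeffs (hg : g.Monic) (hh : h.Monic)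
    (T : Matrix (Fin g.natDegree) (Fin h.natDegree) k) :
    T * companionMatrix h.natDegree h = companionMatrix g.natDegree g * T ↔
      ∃ G, ∀ p, T *ᵥ remCoeffs h p = remCoeffs g (G * p) := by
  constructor
  · intro hT
    obtain ⟨G, hG⟩ := remCoeffs_surjective hg (T *ᵥ remCoeffs h 1)
    have hpow : ∀ t, T *ᵥ remCoeffs h (X ^ t) = remCoeffs g (G * X ^ t) := by
      intro t
      induction t with
      | zero => simpa using hG.symm
      | succ t ih =>
        rw [pow_succ', ← companionMatrix_mulVec_remCoeffs hh, Matrix.mulVec_mulVec, hT,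
          ← Matrix.mulVec_mulVec, ih, companionMatrix_mulVec_remCoeffs hg, mul_left_comm]
    refine ⟨G, fun p => ?_⟩
    induction p using Polynomial.induction_on' with
    | add p q hp hq => rw [map_add, Matrix.mulVec_add, hp, hq, mul_add, map_add]
    | monomial t a =>
      rw [← C_mul_X_pow_eq_monomial, ← smul_eq_C_mul, map_smul, Matrix.mulVec_smul, hpow,
        mul_smul_comm, map_smul]
  · rintro ⟨G, hG⟩
    refine Matrix.ext_of_mulVec_single fun s => ?_
    rw [← Matrix.mulVec_mulVec, ← Matrix.mulVec_mulVec, ← remCoeffs_X_pow hh,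
      companionMatrix_mulVec_remCoeffs hh, hG, hG, companionMatrix_mulVec_remCoeffs hg,
      mul_left_comm]

theorem mul_companionMatrix_eq_iff {q : k[X]} (hg : g.Monic) (hh : h.Monic)
    (hq : ∀ G, g ∣ h * G ↔ q ∣ G) (T : Matrix (Fin g.natDegree) (Fin h.natDegree) k) :
    T * companionMatrix h.natDegree h = companionMatrix g.natDegree g * T ↔
      ∃ lam : k[X],
        T = aeval (companionMatrix g.natDegree g) lam * mulMatrixMod g h.natDegree q := by
  simp_rw [mul_companionMatrix_eq_iff_exists_mulVec_remCoeffs hg hh,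
    mulVec_remCoeffs_eq_iff hg hh, hq, aeval_companionMatrix_mul_mulMatrixMod hg]
  constructor
  · rintro ⟨_, ⟨lam, rfl⟩, rfl⟩
    exact ⟨lam, by rw [mul_comm]⟩
  · rintro ⟨lam, rfl⟩
    exact ⟨lam * q, dvd_mul_left q lam, rfl⟩

end Companion

end Polynomial

namespace Matrix

variable {ι α : Type*} [Fintype ι] [DecidableEq ι] [NonUnitalNonAssocSemiring α]
  {n : ι → Type*} [∀ i, Fintype (n i)]

theorem submatrix_sigmaMk_mul_blockDiagonal' (B : Matrix (Σ i, n i) (Σ i, n i) α)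
    (M : ∀ i, Matrix (n i) (n i) α) (i j : ι) :
    (B * blockDiagonal' M).submatrix (Sigma.mk i) (Sigma.mk j) =
      B.submatrix (Sigma.mk i) (Sigma.mk j) * M j := by
  ext r s
  rw [submatrix_apply, mul_apply, Fintype.sum_sigma,
    Finset.sum_eq_single j (fun j' _ hj' => by simp [blockDiagonal'_apply_ne M _ _ hj'])
      (by simp)]
  simp [blockDiagonal'_apply_eq, mul_apply]

theorem blockDiagonal'_mul_submatrix_sigmaMk (B : Matrix (Σ i, n i) (Σ i, n i) α)
    (M : ∀ i, Matrix (n i) (n i) α) (i j : ι) :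
    (blockDiagonal' M * B).submatrix (Sigma.mk i) (Sigma.mk j) =
      M i * B.submatrix (Sigma.mk i) (Sigma.mk j) := by
  ext r s
  rw [submatrix_apply, mul_apply, Fintype.sum_sigma,
    Finset.sum_eq_single i (fun i' _ hi' => by simp [blockDiagonal'_apply_ne M _ _ hi'.symm])
      (by simp)]
  simp [blockDiagonal'_apply_eq, mul_apply]

theorem mul_blockDiagonal'_eq_iff (B : Matrix (Σ i, n i) (Σ i, n i) α)
    (M : ∀ i, Matrix (n i) (n i) α) :
    B * blockDiagonal' M = blockDiagonal' M * B ↔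
      ∀ i j, B.submatrix (Sigma.mk i) (Sigma.mk j) * M j =
        M i * B.submatrix (Sigma.mk i) (Sigma.mk j) := by
  simp_rw [← submatrix_sigmaMk_mul_blockDiagonal', ← blockDiagonal'_mul_submatrix_sigmaMk]
  exact ⟨fun h i j => by rw [h],
    fun h => ext fun ⟨i, r⟩ ⟨j, s⟩ => congr_fun₂ (h i j) r s⟩

end Matrix

section RationalCanonicalForm

variable {k : Type*} [Field k] {m : ℕ} (f : Fin m → k[X])

theorem dvd_mul_iff_genPoly_dvd (hmonic : ∀ i, (f i).Monic)
    (hdvd : ∀ i j : Fin m, i ≤ j → f i ∣ f j) (i j : Fin m) (G : k[X]) :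
    f i ∣ f j * G ↔ genPoly f i j ∣ G := by
  unfold genPoly
  split_ifs with hji
  · conv_lhs => rw [← modByMonic_add_div (f i) (f j),
      (modByMonic_eq_zero_iff_dvd (hmonic j)).2 (hdvd j i hji.le), zero_add]
    exact mul_dvd_mul_iff_left (hmonic j).ne_zero
  · simpa using (hdvd i j (not_lt.1 hji)).mul_right G

theorem degree_genPoly_lt (hmonic : ∀ i, (f i).Monic) (hdeg : ∀ i, 1 ≤ (f i).natDegree)
    (i j : Fin m) : (genPoly f i j).degree < (f i).degree := by
  unfold genPoly
  split_ifs
  · exact degree_divByMonic_lt _ _ (hmonic i).ne_zero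
      (natDegree_pos_iff_degree_pos.1 (hdeg j))
  · rw [degree_one]
    exact natDegree_pos_iff_degree_pos.1 (hdeg i)

theorem genMatrix_eq_mulMatrixMod (hmonic : ∀ i, (f i).Monic)
    (hdeg : ∀ i, 1 ≤ (f i).natDegree) (i j : Fin m) :
    genMatrix f i j = mulMatrixMod (f i) (f j).natDegree (genPoly f i j) := by
  ext r s
  rw [genMatrix, mulMatrixMod, of_apply, of_apply,
    ← remCoeffs_of_degree_lt (hmonic i) (degree_genPoly_lt f hmonic hdeg i j),
    ← aeval_X_pow (R := k), aeval_companionMatrix_mulVec_remCoeffs (hmonic i)]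

end RationalCanonicalForm

theorem commutes_blockDiagonal_companion_iff_general {k : Type*} [Field k] {m : ℕ}
    (f : Fin m → k[X]) (hmonic : ∀ i, (f i).Monic)
    (hdeg : ∀ i, 1 ≤ (f i).natDegree) (hdvd : ∀ i j : Fin m, i ≤ j → f i ∣ f j)
    (B : Matrix (Σ i : Fin m, Fin (f i).natDegree) (Σ i : Fin m, Fin (f i).natDegree) k) :
    B * Matrix.blockDiagonal' (fun i => companionMatrix (f i).natDegree (f i)) =
      Matrix.blockDiagonal' (fun i => companionMatrix (f i).natDegree (f i)) * B ↔
    ∀ i j : Fin m, ∃ lam : k[X],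
      ∀ (r : Fin (f i).natDegree) (s : Fin (f j).natDegree),
        B ⟨i, r⟩ ⟨j, s⟩ =
          (Polynomial.aeval (companionMatrix (f i).natDegree (f i)) lam * genMatrix f i j)
            r s := by
  rw [mul_blockDiagonal'_eq_iff]
  refine forall₂_congr fun i j => ?_
  rw [mul_companionMatrix_eq_iff (hmonic i) (hmonic j)
    (dvd_mul_iff_genPoly_dvd f hmonic hdvd i j), genMatrix_eq_mulMatrixMod f hmonic hdeg i j]
  simp only [Matrix.ext_iff.symm, submatrix_apply]

/-- **Centralizer of a matrix in rational canonical form.**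
Let `f 0 ∣ f 1 ∣ ⋯ ∣ f (m-1)` be nonzero monic polynomials of degrees `≥ 1` and let
`A = C(f 0) ⊕ ⋯ ⊕ C(f (m-1))` be the block diagonal matrix of companion matrices.
Then `B` commutes with `A` iff each block `B_{ij}` of `B` equals `λ_{ij}(C(f_i)) Q_{ij}`
for some polynomial `λ_{ij}`. -/
theorem commutes_blockDiagonal_companion_iff {k : Type*} [Field k] {m : ℕ}
    (f : Fin m → k[X]) (hmonic : ∀ i, (f i).Monic) (hne : ∀ i, f i ≠ 0)
    (hdeg : ∀ i, 1 ≤ (f i).natDegree) (hdvd : ∀ i j : Fin m, i ≤ j → f i ∣ f j)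
    (B : Matrix (Σ i : Fin m, Fin (f i).natDegree) (Σ i : Fin m, Fin (f i).natDegree) k) :
    B * Matrix.blockDiagonal' (fun i => companionMatrix (f i).natDegree (f i)) =
      Matrix.blockDiagonal' (fun i => companionMatrix (f i).natDegree (f i)) * B ↔
    ∀ i j : Fin m, ∃ lam : k[X],
      ∀ (r : Fin (f i).natDegree) (s : Fin (f j).natDegree),
        B ⟨i, r⟩ ⟨j, s⟩ =
          (Polynomial.aeval (companionMatrix (f i).natDegree (f i)) lam * genMatrix f i j)
            r s :=
  commutes_blockDiagonal_companion_iff_general f hmonic hdeg hdvd B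
end
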